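/- arXiv:1110.0233 — 6 statements merged into one kernel-verified Lean document; each statement's English description precedes it below -/
import Mathlib

section
/- Let D be a finite-dimensional division algebra over a nonarchimedean local field K. Then the quotient group D*/K* is compact. -/
/-- A nonarchimedean local field: a nontrivially normed field whose norm is
nonarchimedean and which is locally compact. -/
class NonarchLocalField (K : Type*) extends NontriviallyNormedField K where
  isNonarchimedean : IsNonarchimedean (norm : K → ℝ)
  locallyCompact : LocallyCompactSpace K

/-- `s` is a full `O`-lattice in the finite-dimensional `K`-algebra (or vector space) `A`:
it is contained in a finitely generated `O`-submodule and spans `A` over `K`. -/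
def IsFullLattice (K : Type*) [Field K] {A : Type*} [Ring A] [Algebra K A]
    (O : Subring K) (s : Set A) : Prop :=
  letI : Algebra O A := ((algebraMap K A).comp O.subtype).toAlgebra' (fun c x => Algebra.commutes (c : K) x)
  (∃ t : Finset A, s ⊆ (Submodule.span O (t : Set A) : Set A)) ∧
    Submodule.span K s = ⊤

/-- An `O`-order of maximal rank in `A`: a subring which is a full `O`-lattice
and is stable under multiplication by `O`. -/
def IsOrder (K : Type*) [Field K] {A : Type*} [Ring A] [Algebra K A]
    (O : Subring K) (D : Subring A) : Prop :=
  IsFullLattice K O (D : Set A) ∧ ∀ c ∈ O, ∀ x ∈ D, algebraMap K A c * x ∈ D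

/-- A maximal `O`-order in `A`. -/
def IsMaximalOrder (K : Type*) [Field K] {A : Type*} [Ring A] [Algebra K A]
    (O : Subring K) (D : Subring A) : Prop :=
  IsOrder K O D ∧ ∀ D' : Subring A, IsOrder K O D' → D ≤ D' → D = D'

/-- Let `D` be a finite-dimensional central division algebra over a nonarchimedean
local field `K`, with its canonical topology (given by a norm extending that of `K`).
Then the quotient group `D*/K*` is compact. -/
theorem units_quotient_compact (K D : Type*) [NonarchLocalField K]
    [NormedDivisionRing D] [NormedAlgebra K D] [FiniteDimensional K D]
    [Algebra.IsCentral K D]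
    (hext : ∀ k : K, ‖algebraMap K D k‖ = ‖k‖) :
    CompactSpace (Dˣ ⧸ (Units.map (algebraMap K D).toMonoidHom).range) := by
  haveI := NonarchLocalField.locallyCompact (K := K)
  haveI : ProperSpace D := FiniteDimensional.proper K D
  obtain ⟨k₀, hk₀⟩ := NormedField.exists_one_lt_norm K
  have hk0 : k₀ ≠ 0 := by
    intro h
    rw [h, norm_zero] at hk₀; linarith
  set c := ‖k₀‖ with hc
  set H := (Units.map (algebraMap K D).toMonoidHom).range with hH
  set S : Set D := {x | 1 ≤ ‖x‖ ∧ ‖x‖ ≤ c} with hS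
  have hSclosed : IsClosed S :=
    (isClosed_le continuous_const continuous_norm).inter
      (isClosed_le continuous_norm continuous_const)
  have hSbdd : Bornology.IsBounded S :=
    (Metric.isBounded_closedBall (x := (0 : D)) (r := c)).subset fun x hx => by
      simpa [Metric.mem_closedBall, dist_zero_right] using hx.2
  have hScomp : IsCompact S := Metric.isCompact_of_isClosed_isBounded hSclosed hSbdd
  have hSsub : S ⊆ Set.range (Units.val : Dˣ → D) := by
    intro x hx
    have hx0 : x ≠ 0 := by
      rintro rfl
      simp only [hS, Set.mem_setOf_eq, norm_zero] at hx
      linarith [hx.1]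
    exact ⟨Units.mk0 x hx0, rfl⟩
  have hT : IsCompact ((Units.val : Dˣ → D) ⁻¹' S) := by
    rw [Units.isEmbedding_val₀.isCompact_iff, Set.image_preimage_eq_of_subset hSsub]
    exact hScomp
  set u₀ : Dˣ := Units.map (algebraMap K D).toMonoidHom (Units.mk0 k₀ hk0) with hu₀
  have hu₀val : (u₀ : D) = algebraMap K D k₀ := rfl
  have hu₀norm : ‖(u₀ : D)‖ = c := by rw [hu₀val, hext]
  have huniv : (Set.univ : Set (Dˣ ⧸ H)) =
      QuotientGroup.mk '' ((Units.val : Dˣ → D) ⁻¹' S) := by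
    apply Set.eq_of_subset_of_subset _ (Set.subset_univ _)
    intro q _
    induction q using QuotientGroup.induction_on with
    | H x =>
      have hxn : 0 < ‖(x : D)‖ := norm_pos_iff.2 x.ne_zero
      obtain ⟨n, hn1, hn2⟩ := exists_mem_Ico_zpow hxn hk₀
      refine ⟨x * (u₀ ^ n)⁻¹, ?_, ?_⟩
      · have hval : ((x * (u₀ ^ n)⁻¹ : Dˣ) : D) = (x : D) * ((u₀ : D) ^ n)⁻¹ := by
          push_cast
          rfl
        have hnorm : ‖((x * (u₀ ^ n)⁻¹ : Dˣ) : D)‖ = ‖(x : D)‖ * (c ^ n)⁻¹ := by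
          rw [hval, norm_mul, norm_inv, norm_zpow, hu₀norm]
        have hcpos : (0 : ℝ) < c ^ n := zpow_pos (by linarith) n
        constructor
        · rw [hnorm, ← div_eq_mul_inv, le_div_iff₀ hcpos, one_mul]
          exact hn1
        · rw [hnorm, ← div_eq_mul_inv, div_le_iff₀ hcpos]
          calc ‖(x : D)‖ ≤ c ^ (n + 1) := le_of_lt hn2
            _ = c * c ^ n := by rw [zpow_add_one₀ (by linarith : c ≠ 0)]; ring
      · rw [QuotientGroup.eq]
        have : (x * (u₀ ^ n)⁻¹)⁻¹ * x = u₀ ^ n := by group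
        rw [this]
        have hu : u₀ ∈ H := ⟨Units.mk0 k₀ hk0, rfl⟩
        exact Subgroup.zpow_mem H hu n
  refine ⟨?_⟩
  rw [huniv]
  exact hT.image continuous_quot_mk
end

section
/- Let K be a nonarchimedean local field, A = M_n(K) the matrix algebra, and L ⊆ A a maximal subfield (a field extension of K of degree n embedded in A). Let H ⊆ L be an O_K-order of maximal rank in L (i.e., H spans L over K). Then the set of O_K-lattices in K^n that are stable under H is partitioned into finitely many orbits under the scaling action of K*. -/
open Pointwise Bornology Filter Topology

namespace Subgroup

variable {G : Type*} [Group G]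

@[to_additive]
theorem finite_Icc_of_finite_quotient {A B : Subgroup G} [Finite (B ⧸ A.subgroupOf B)] :
    (Set.Icc A B).Finite := by
  let cosets (X : Subgroup G) : Set (B ⧸ A.subgroupOf B) :=
    QuotientGroup.mk '' (X.subgroupOf B : Set B)
  have le_of_cosets_subset {X X' : Subgroup G} (hXB : X ≤ B) (hAX' : A ≤ X')
      (h : cosets X ⊆ cosets X') : X ≤ X' := by
    intro x hx
    obtain ⟨y, hy, hyx⟩ := h ⟨⟨x, hXB hx⟩, hx, rfl⟩
    have hA := QuotientGroup.eq.mp hyx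
    rw [mem_subgroupOf] at hA
    simpa using X'.mul_mem hy (hAX' hA)
  refine Set.Finite.of_finite_image (f := cosets) (Set.toFinite _)
    fun X hX X' hX' h => le_antisymm ?_ ?_
  · exact le_of_cosets_subset hX.2 hX'.1 h.le
  · exact le_of_cosets_subset hX'.2 hX.1 h.ge

@[to_additive]
theorem finite_Icc_of_isOpen_of_isCompact [TopologicalSpace G] [IsTopologicalGroup G]
    {A B : Subgroup G} (hA : IsOpen (A : Set G)) (hB : IsCompact (B : Set G)) :
    (Set.Icc A B).Finite := by
  have : CompactSpace B := isCompact_iff_compactSpace.mp hB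
  have : Finite (B ⧸ A.subgroupOf B) :=
    (A.subgroupOf B).quotient_finite_of_isOpen (hA.preimage continuous_subtype_val)
  exact finite_Icc_of_finite_quotient

end Subgroup

theorem AddSubgroup.isOpen_of_span_eq_top {K E : Type*} [NontriviallyNormedField K]
    [CompleteSpace K] [NormedAddCommGroup E] [NormedSpace K E] [FiniteDimensional K E]
    {Λ : AddSubgroup E} (hsmul : ∀ c : K, ‖c‖ ≤ 1 → ∀ x ∈ Λ, c • x ∈ Λ)
    (hspan : Submodule.span K (Λ : Set E) = ⊤) : IsOpen (Λ : Set E) := by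
  obtain ⟨s, hsΛ, hsspan, hsli⟩ := exists_linearIndependent K (Λ : Set E)
  have : Finite s := hsli.finite
  have := Fintype.ofFinite s
  let b := Module.Basis.mk hsli (by rw [Subtype.range_coe, hsspan, hspan])
  have hsmall : ∀ᶠ x in 𝓝 (0 : E), ∀ i, ‖b.coord i x‖ < 1 := by
    refine eventually_all.2 fun i => ?_
    have hcont := (continuous_norm.comp (b.coord i).continuous_of_finiteDimensional).tendsto 0
    simpa using hcont.eventually (gt_mem_nhds (by simp))
  refine Λ.isOpen_of_mem_nhds (g := 0) (hsmall.mono fun x hx => show x ∈ Λ from ?_)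
  rw [← b.sum_repr x]
  exact sum_mem fun i _ => hsmul _ (hx i).le _ (by simpa [b] using hsΛ i.2)

theorem IsFullLattice.isBounded {K A : Type*} [NormedField K] [SeminormedRing A]
    [NormedAlgebra K A] {O : Subring K} (hO : ∀ c ∈ O, ‖c‖ ≤ 1) {s : Set A}
    (hs : IsFullLattice K O s) : IsBounded s := by
  let _ : Algebra O A := ((algebraMap K A).comp O.subtype).toAlgebra'
    (fun c x => Algebra.commutes (c : K) x)
  obtain ⟨⟨t, hst⟩, -⟩ : (∃ t : Finset A, s ⊆ (Submodule.span O (t : Set A) : Set A)) ∧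
    Submodule.span K s = ⊤ := hs
  refine (Metric.isBounded_iff_subset_closedBall 0).2 ⟨∑ x ∈ t, ‖x‖, fun y hy => ?_⟩
  obtain ⟨c, -, rfl⟩ := Submodule.mem_span_finset.mp (hst hy)
  rw [mem_closedBall_zero_iff]
  refine (norm_sum_le _ _).trans (Finset.sum_le_sum fun x _ => ?_)
  calc ‖c x • x‖ = ‖(c x : K) • x‖ := by rw [Algebra.smul_def, Algebra.smul_def]; rfl
    _ ≤ ‖(c x : K)‖ * ‖x‖ := norm_smul_le _ _
    _ ≤ ‖x‖ := mul_le_of_le_one_left (norm_nonneg _) (hO _ (c x).2)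

section Normalization

variable {K E : Type*} [NontriviallyNormedField K] [NormedAddCommGroup E] [NormedSpace K E]
  {u : Kˣ} {U Λ : AddSubgroup E}

theorem norm_units_zpow_smul (u : Kˣ) (m : ℤ) (x : E) : ‖u ^ m • x‖ = ‖(u : K)‖ ^ m * ‖x‖ := by
  rw [Units.smul_def, Units.val_zpow_eq_zpow_val, norm_smul, norm_zpow]

theorem nonempty_setOf_zpow_smul_le (hu : ‖(u : K)‖ < 1) (hUo : IsOpen (U : Set E))
    (hΛb : IsBounded (Λ : Set E)) : {m : ℤ | u ^ m • Λ ≤ U}.Nonempty := by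
  obtain ⟨r, hr, hrU⟩ := Metric.isOpen_iff.mp hUo 0 U.zero_mem
  obtain ⟨R, hR, hΛR⟩ := hΛb.subset_closedBall_lt 0 0
  obtain ⟨k, hk⟩ := exists_pow_lt_of_lt_one (div_pos hr hR) hu
  refine ⟨k, fun y hy => hrU ?_⟩
  obtain ⟨x, hx, rfl⟩ := (AddSubgroup.mem_smul_pointwise_iff_exists _ _ _).1 hy
  rw [mem_ball_zero_iff, norm_units_zpow_smul, zpow_natCast]
  calc ‖(u : K)‖ ^ k * ‖x‖ ≤ ‖(u : K)‖ ^ k * R := by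
        gcongr; exact mem_closedBall_zero_iff.1 (hΛR hx)
    _ < r := (lt_div_iff₀ hR).1 hk

theorem bddBelow_setOf_zpow_smul_le (hu : ‖(u : K)‖ < 1) (hUb : IsBounded (U : Set E))
    (hΛ : Λ ≠ ⊥) : BddBelow {m : ℤ | u ^ m • Λ ≤ U} := by
  have hu0 : 0 < ‖(u : K)‖ := norm_pos_iff.2 u.ne_zero
  obtain ⟨R, hR, hUR⟩ := hUb.subset_closedBall_lt 0 0
  obtain ⟨x, hx, hx0⟩ := Λ.bot_or_exists_ne_zero.resolve_left hΛ
  have hxpos : 0 < ‖x‖ := norm_pos_iff.2 hx0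
  obtain ⟨k, hk⟩ := exists_pow_lt_of_lt_one (div_pos hxpos hR) hu
  refine ⟨-k, fun m hm => ?_⟩
  by_contra! hlt
  have hxU : ‖(u : K)‖ ^ m * ‖x‖ ≤ R := by
    rw [← norm_units_zpow_smul, ← mem_closedBall_zero_iff]
    exact hUR (hm (AddSubgroup.smul_mem_pointwise_smul _ _ _ hx))
  have hone : 1 ≤ ‖(u : K)‖ ^ (k + m) := one_le_zpow_of_nonpos₀ hu0 hu.le (by omega)
  refine lt_irrefl ‖x‖ ?_
  calc ‖x‖ ≤ ‖(u : K)‖ ^ (k + m) * ‖x‖ := le_mul_of_one_le_left hxpos.le hone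
    _ = ‖(u : K)‖ ^ k * (‖(u : K)‖ ^ m * ‖x‖) := by
        rw [zpow_add₀ hu0.ne', zpow_natCast, mul_assoc]
    _ ≤ ‖(u : K)‖ ^ k * R := by gcongr
    _ < ‖x‖ := (lt_div_iff₀ hR).1 hk

theorem exists_zpow_smul_le_and_not_le_smul (hu : ‖(u : K)‖ < 1) (hUo : IsOpen (U : Set E))
    (hUb : IsBounded (U : Set E)) (hΛb : IsBounded (Λ : Set E)) (hΛ : Λ ≠ ⊥) :
    ∃ m : ℤ, u ^ m • Λ ≤ U ∧ ¬u ^ m • Λ ≤ u • U := by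
  have hbdd := bddBelow_setOf_zpow_smul_le hu hUb hΛ
  set m := sInf {m : ℤ | u ^ m • Λ ≤ U}
  refine ⟨m, Int.csInf_mem (nonempty_setOf_zpow_smul_le hu hUo hΛb) hbdd, fun h => ?_⟩
  have hsucc : u • (u ^ (m - 1) • Λ) = u ^ m • Λ := by
    rw [smul_smul, ← zpow_one_add, add_sub_cancel]
  have hpred : u ^ (m - 1) • Λ ≤ U :=
    AddSubgroup.pointwise_smul_le_pointwise_smul_iff.1 (hsucc ▸ h)
  linarith [csInf_le hbdd hpred]

end Normalization

section Stable

variable {K L : Type*} [NontriviallyNormedField K] [NormedDivisionRing L] [NormedAlgebra K L]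

theorem exists_pow_smul_inv_mem_of_notMem_smul {u : Kˣ} (hu : ‖(u : K)‖ < 1)
    {U : AddSubgroup L} (hUo : IsOpen (U : Set L)) :
    ∃ N : ℕ, ∀ y : L, y ∉ u • U → u ^ N • y⁻¹ ∈ U := by
  have hu0 : 0 < ‖(u : K)‖ := norm_pos_iff.2 u.ne_zero
  obtain ⟨r, hr, hrU⟩ := Metric.isOpen_iff.mp hUo 0 U.zero_mem
  obtain ⟨N, hN⟩ := exists_pow_lt_of_lt_one (by positivity : 0 < ‖(u : K)‖ * r ^ 2) hu
  refine ⟨N, fun y hy => hrU ?_⟩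
  have hy_large : ‖(u : K)‖ * r ≤ ‖y‖ := by
    by_contra! hlt
    refine hy (AddSubgroup.mem_pointwise_smul_iff_inv_smul_mem.2 (hrU ?_))
    rw [mem_ball_zero_iff, Units.smul_def, norm_smul, Units.val_inv_eq_inv_val, norm_inv]
    exact (inv_mul_lt_iff₀ hu0).2 hlt
  have hy0 : 0 < ‖y‖ := lt_of_lt_of_le (by positivity) hy_large
  rw [mem_ball_zero_iff, Units.smul_def, Units.val_pow_eq_pow_val, norm_smul, norm_inv, norm_pow,
    ← div_eq_mul_inv, div_lt_iff₀ hy0]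
  calc ‖(u : K)‖ ^ N < ‖(u : K)‖ * r ^ 2 := hN
    _ = r * (‖(u : K)‖ * r) := by ring
    _ ≤ r * ‖y‖ := by gcongr

theorem pow_smul_le_of_not_le_smul {H : Subring L} {Λ : AddSubgroup L} {u : Kˣ} {N : ℕ}
    (hN : ∀ y : L, y ∉ u • H.toAddSubgroup → u ^ N • y⁻¹ ∈ H)
    (hHΛ : ∀ h ∈ H, ∀ x ∈ Λ, h * x ∈ Λ) (hΛ : ¬Λ ≤ u • H.toAddSubgroup) :
    u ^ N • H.toAddSubgroup ≤ Λ := by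
  obtain ⟨y, hyΛ, hyH⟩ := SetLike.not_le_iff_exists.1 hΛ
  have hy0 : y ≠ 0 := by rintro rfl; exact hyH (zero_mem _)
  intro z hz
  obtain ⟨h, hh, rfl⟩ := (AddSubgroup.mem_smul_pointwise_iff_exists _ _ _).1 hz
  have hfactor : u ^ N • h = h * (u ^ N • y⁻¹) * y := by
    rw [mul_smul_comm, smul_mul_assoc, mul_assoc, inv_mul_cancel₀ hy0, mul_one]
  rw [hfactor]
  exact hHΛ _ (H.mul_mem hh (hN y hyH)) y hyΛ

theorem Subring.exists_finset_eq_units_smul_of_isOpen_of_isCompact (H : Subring L)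
    (hHo : IsOpen (H : Set L)) (hHc : IsCompact (H : Set L)) :
    ∃ S : Finset (AddSubgroup L), ∀ Λ : AddSubgroup L, IsBounded (Λ : Set L) → Λ ≠ ⊥ →
      (∀ h ∈ H, ∀ x ∈ Λ, h * x ∈ Λ) → ∃ Λ₀ ∈ S, ∃ k : Kˣ, Λ = k • Λ₀ := by
  obtain ⟨ϖ, hϖ0, hϖ1⟩ := NormedField.exists_norm_lt_one K
  set u := Units.mk0 ϖ (norm_pos_iff.1 hϖ0)
  obtain ⟨N, hN⟩ := exists_pow_smul_inv_mem_of_notMem_smul (u := u) (U := H.toAddSubgroup) hϖ1 hHo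
  have hfin := AddSubgroup.finite_Icc_of_isOpen_of_isCompact
    (A := u ^ N • H.toAddSubgroup) (B := H.toAddSubgroup)
    (show IsOpen (u ^ N • (H : Set L)) from hHo.smul _) hHc
  refine ⟨hfin.toFinset, fun Λ hΛb hΛ hHΛ => ?_⟩
  obtain ⟨m, hle, hnle⟩ := exists_zpow_smul_le_and_not_le_smul (u := u) (U := H.toAddSubgroup)
    hϖ1 hHo hHc.isBounded hΛb hΛ
  have hHΛm : ∀ h ∈ H, ∀ x ∈ u ^ m • Λ, h * x ∈ u ^ m • Λ := by
    intro h hh _ hmem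
    obtain ⟨x, hx, rfl⟩ := (AddSubgroup.mem_smul_pointwise_iff_exists _ _ _).1 hmem
    rw [mul_smul_comm]
    exact AddSubgroup.smul_mem_pointwise_smul _ _ _ (hHΛ h hh x hx)
  refine ⟨u ^ m • Λ, hfin.mem_toFinset.2 ⟨pow_smul_le_of_not_le_smul hN hHΛm hnle, hle⟩,
    (u ^ m)⁻¹, (inv_smul_smul _ _).symm⟩

end Stable

/-- Let `K` be a nonarchimedean local field with ring of integers `O`, and `L/K` a
finite field extension (a maximal subfield of the matrix algebra `M_n(K) ≅ End_K(L)`,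
acting on `K^n ≅ L` by multiplication). Let `H ⊆ L` be an `O`-order of maximal rank.
Then the full `O`-lattices in `L` stable under `H` fall into finitely many orbits
under the scaling action of `K*`. -/
theorem finitely_many_scaling_orbits_of_stable_lattices
    (K : Type*) [NonarchLocalField K] (O : Subring K) (hO : ∀ x : K, x ∈ O ↔ ‖x‖ ≤ 1)
    (L : Type*) [Field L] [Algebra K L] [FiniteDimensional K L]
    (H : Subring L) (hH : IsOrder K O H) :
    ∃ S : Finset (AddSubgroup L),
      ∀ Λ : AddSubgroup L,
        IsFullLattice K O (Λ : Set L) →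
        (∀ c ∈ O, ∀ x ∈ Λ, algebraMap K L c * x ∈ Λ) →
        (∀ h ∈ H, ∀ x ∈ Λ, h * x ∈ Λ) →
        ∃ Λ₀ ∈ S, ∃ k : Kˣ,
          (Λ : Set L) = (fun y => algebraMap K L (k : K) * y) '' (Λ₀ : Set L) := by
  have : LocallyCompactSpace K := NonarchLocalField.locallyCompact
  have : ProperSpace K := .of_locallyCompactSpace K
  have : IsUltrametricDist K :=
    .isUltrametricDist_of_isNonarchimedean_norm NonarchLocalField.isNonarchimedean
  let _ := spectralNorm.normedField K L
  let _ := spectralNorm.normedAlgebra K L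
  have : ProperSpace L := FiniteDimensional.proper K L
  have hOnorm : ∀ c ∈ O, ‖c‖ ≤ 1 := fun c => (hO c).1
  have hHopen : IsOpen (H : Set L) :=
    H.toAddSubgroup.isOpen_of_span_eq_top
      (fun c hc x hx => by rw [Algebra.smul_def]; exact hH.2 c ((hO c).2 hc) x hx) hH.1.2
  have hHcompact : IsCompact (H : Set L) :=
    Metric.isCompact_of_isClosed_isBounded (H.toAddSubgroup.isClosed_of_isOpen hHopen)
      (hH.1.isBounded hOnorm)
  obtain ⟨S, hS⟩ := H.exists_finset_eq_units_smul_of_isOpen_of_isCompact (K := K) hHopen hHcompact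
  refine ⟨S, fun Λ hΛ _ hHΛ => ?_⟩
  have hΛ0 : Λ ≠ ⊥ := by
    rintro rfl
    simpa using hΛ.2
  obtain ⟨Λ₀, hΛ₀, k, rfl⟩ := hS Λ (hΛ.isBounded hOnorm) hΛ0 hHΛ
  refine ⟨Λ₀, hΛ₀, k, ?_⟩
  show k • (Λ₀ : Set L) = _
  rw [← Set.image_smul]
  simp only [Units.smul_def, Algebra.smul_def]
end

section
/- Let K be a nonarchimedean local field, A = M_m(D) for a central division K-algebra D, and let 𝔇 be a maximal order in A. Then the conjugation stabilizer of 𝔇 in A* equals 𝔇* · D* · K* (where D* embeds diagonally), i.e., every x ∈ A* with x𝔇x^{-1} = 𝔇 lies in 𝔇* D* K*. -/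
set_option maxHeartbeats 1000000

/-! The norm of `D` is ultrametric because that of `K` is. If `x` normalizes `M_m(O_D)`,
conjugating the matrix units gives `‖x k i‖ * ‖x⁻¹ j l‖ ≤ 1` for all indices, while expanding
`(x * x⁻¹) z z = 1` ultrametrically gives some `p` with `‖x z p‖ * ‖x⁻¹ p z‖ ≥ 1`. Hence
`d = x z p` is an entry of maximal norm, both `x * d⁻¹` and `d * x⁻¹` have integral entries, and
`x = (x * d⁻¹) * d`: no factor from `K*` is needed. -/

instance NonarchLocalField.isUltrametricDist (K : Type*) [NonarchLocalField K] :
    IsUltrametricDist K :=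
  IsUltrametricDist.isUltrametricDist_of_isNonarchimedean_norm NonarchLocalField.isNonarchimedean

namespace Matrix

variable {n R : Type*} [Fintype n] [DecidableEq n]

theorem mul_single_mul_apply [Semiring R] (A B : Matrix n n R) (i j k l : n) (c : R) :
    (A * single i j c * B) k l = A k i * c * B j l := by
  rw [mul_assoc, mul_apply, Finset.sum_eq_single i
    (fun p _ hp => by rw [single_mul_apply_of_ne _ _ _ _ _ hp, mul_zero]) (by simp),
    single_mul_apply_same, mul_assoc]

variable [NormedDivisionRing R]

theorem norm_mul_norm_le_one_of_forall_conj_norm_le_one {A B : Matrix n n R}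
    (h : ∀ a : Matrix n n R, (∀ i j, ‖a i j‖ ≤ 1) → ∀ k l, ‖(A * a * B) k l‖ ≤ 1)
    (i j k l : n) : ‖A k i‖ * ‖B j l‖ ≤ 1 := by
  have hsingle : ∀ p q, ‖single i j (1 : R) p q‖ ≤ 1 := fun p q => by
    rw [single_apply]; split_ifs <;> simp
  simpa [mul_single_mul_apply] using h _ hsingle k l

theorem exists_one_le_norm_mul_norm_of_mul_eq_one [IsUltrametricDist R] {A B : Matrix n n R}
    (hAB : A * B = 1) (z : n) : ∃ p, 1 ≤ ‖A z p‖ * ‖B p z‖ := by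
  obtain ⟨p, -, hp⟩ := IsUltrametricDist.exists_norm_finsetSum_le_of_nonempty
    ⟨z, Finset.mem_univ z⟩ (fun p => A z p * B p z)
  refine ⟨p, ?_⟩
  rwa [← mul_apply, hAB, one_apply_eq, norm_one, norm_mul] at hp

theorem exists_units_eq_mul_scalar_of_norm_mul_norm_le_one [IsUltrametricDist R]
    (x : (Matrix n n R)ˣ)
    (hx : ∀ i j k l, ‖(x : Matrix n n R) k i‖ * ‖(↑x⁻¹ : Matrix n n R) j l‖ ≤ 1) :
    ∃ (u : (Matrix n n R)ˣ) (d : Rˣ), (∀ k l, ‖(u : Matrix n n R) k l‖ ≤ 1) ∧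
      (∀ k l, ‖(↑u⁻¹ : Matrix n n R) k l‖ ≤ 1) ∧
      (x : Matrix n n R) = u * scalar n (d : R) := by
  rcases isEmpty_or_nonempty n with _ | ⟨⟨z⟩⟩
  · exact ⟨x, 1, isEmptyElim, isEmptyElim, Subsingleton.elim _ _⟩
  · obtain ⟨p, hp⟩ := exists_one_le_norm_mul_norm_of_mul_eq_one x.mul_inv z
    have hpivot : ‖(x : Matrix n n R) z p‖ * ‖(↑x⁻¹ : Matrix n n R) p z‖ = 1 :=
      le_antisymm (hx p p z z) hp
    have hd : (x : Matrix n n R) z p ≠ 0 := by rintro h; simp [h] at hpivot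
    have hinv : 0 < ‖(↑x⁻¹ : Matrix n n R) p z‖ :=
      (norm_nonneg _).lt_of_ne (by rintro h; simp [← h] at hpivot)
    let ι : Rˣ →* (Matrix n n R)ˣ := Units.map (scalar n : R →+* Matrix n n R).toMonoidHom
    refine ⟨x * ι (Units.mk0 _ hd)⁻¹, Units.mk0 _ hd, fun k l => ?_, fun k l => ?_, ?_⟩
    · have hle : ‖(x : Matrix n n R) k l‖ ≤ ‖(x : Matrix n n R) z p‖ :=
        le_of_mul_le_mul_right (hpivot ▸ hx l p k z) hinv
      simpa [ι, mul_diagonal, norm_inv] using mul_inv_le_one_of_le₀ hle (norm_nonneg _)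
    · simpa [ι, diagonal_mul] using hx p k z l
    · simp [ι, mul_assoc, inv_mul_cancel₀ hd]

end Matrix

theorem stabilizer_of_maximal_order_in_matrix_algebra_general
    (K : Type*) [NonarchLocalField K]
    (D : Type*) [NormedDivisionRing D] [NormedAlgebra K D]
    (m : ℕ) (𝔇 : Subring (Matrix (Fin m) (Fin m) D))
    (h𝔇 : (𝔇 : Set (Matrix (Fin m) (Fin m) D)) = {x | ∀ i j, ‖x i j‖ ≤ 1}) :
    ∀ x : (Matrix (Fin m) (Fin m) D)ˣ,
      (∀ a : Matrix (Fin m) (Fin m) D,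
          a ∈ 𝔇 ↔ Units.val x * a * Units.val x⁻¹ ∈ 𝔇) →
      ∃ (u : (Matrix (Fin m) (Fin m) D)ˣ) (d : Dˣ) (k : Kˣ),
        Units.val u ∈ 𝔇 ∧
        Units.val u⁻¹ ∈ 𝔇 ∧
        Units.val x =
          Units.val u * Matrix.scalar (Fin m) (d : D) *
            algebraMap K (Matrix (Fin m) (Fin m) D) (k : K) := by
  intro x hx
  have : IsUltrametricDist D := .of_normedAlgebra K
  have hmem (a : Matrix (Fin m) (Fin m) D) : a ∈ 𝔇 ↔ ∀ i j, ‖a i j‖ ≤ 1 := Set.ext_iff.mp h𝔇 a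
  obtain ⟨u, d, hu, hu_inv, hxu⟩ := Matrix.exists_units_eq_mul_scalar_of_norm_mul_norm_le_one x
    (Matrix.norm_mul_norm_le_one_of_forall_conj_norm_le_one fun a ha =>
      (hmem _).mp ((hx a).mp ((hmem a).mpr ha)))
  exact ⟨u, d, 1, (hmem _).mpr hu, (hmem _).mpr hu_inv, by simpa using hxu⟩

/-- Let `K` be a nonarchimedean local field, `D` a central division algebra over `K`
with unique maximal order `O_D = {d : ‖d‖ ≤ 1}`, and `A = M_m(D)`. If `𝔇 = M_m(O_D)`
is a maximal order of `A`, then every `x ∈ A*` with `x 𝔇 x⁻¹ = 𝔇` lies in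
`𝔇* · D* · K*` (with `D*` and `K*` embedded as scalar matrices). -/
theorem stabilizer_of_maximal_order_in_matrix_algebra
    (K : Type*) [NonarchLocalField K] (O : Subring K) (hO : ∀ x : K, x ∈ O ↔ ‖x‖ ≤ 1)
    (D : Type*) [NormedDivisionRing D] [NormedAlgebra K D] [FiniteDimensional K D]
    [Algebra.IsCentral K D]
    (hext : ∀ k : K, ‖algebraMap K D k‖ = ‖k‖)
    (m : ℕ) (𝔇 : Subring (Matrix (Fin m) (Fin m) D))
    (h𝔇max : IsMaximalOrder K O 𝔇)
    (h𝔇 : (𝔇 : Set (Matrix (Fin m) (Fin m) D)) = {x | ∀ i j, ‖x i j‖ ≤ 1}) :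
    ∀ x : (Matrix (Fin m) (Fin m) D)ˣ,
      (∀ a : Matrix (Fin m) (Fin m) D,
          a ∈ 𝔇 ↔ Units.val x * a * Units.val x⁻¹ ∈ 𝔇) →
      ∃ (u : (Matrix (Fin m) (Fin m) D)ˣ) (d : Dˣ) (k : Kˣ),
        Units.val u ∈ 𝔇 ∧
        Units.val u⁻¹ ∈ 𝔇 ∧
        Units.val x =
          Units.val u * Matrix.scalar (Fin m) (d : D) *
            algebraMap K (Matrix (Fin m) (Fin m) D) (k : K) :=
  stabilizer_of_maximal_order_in_matrix_algebra_general K D m 𝔇 h𝔇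
end

section
/- Let K be a field, A a central simple K-algebra of dimension p² for a prime p, L ⊆ A a maximal subfield with L/K cyclic Galois with generator σ, and c ∈ A* an element with c a c^{-1} = σ(a) for all a ∈ L. Then the powers 1, c, c², ..., c^{p-1} are linearly independent over L, L and c generate A as a K-algebra, and c^p ∈ K. -/
/-!
The independence is Dedekind's argument for characters, twisted by `c`: if `∑ ι(fᵢ) cⁱ = 0`,
multiplying by `ι x` on the right and by `ι (σʲ x)` on the left and subtracting kills the
`j`-th term and scales the `i`-th by `σⁱ x - σʲ x`, which is nonzero for a suitable `x`
because the `σⁱ`, `i < p = orderOf σ`, are distinct. Hence `f ↦ ∑ ι(fᵢ) cⁱ` is an injective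
`K`-linear map between spaces of dimension `p²`, so it is onto and `L`, `c` generate `A`.
Finally `cᵖ` commutes with `c` and, as `σᵖ = 1`, with `ι L`, so it is central.
-/

open Finset Module

section TwistedIndependence

variable {L A ι : Type*} [Field L] [Ring A] (φ : L →+* A) {τ : ι → L →+* L}
  {u : ι → Aˣ}

theorem sum_map_mul_sub_mul_units (hu : ∀ i a, (u i : A) * φ a = φ (τ i a) * u i)
    (s : Finset ι) (f : ι → L) (x y : L) :
    ∑ i ∈ s, φ (f i * (τ i x - y)) * u i =
      (∑ i ∈ s, φ (f i) * u i) * φ x - φ y * ∑ i ∈ s, φ (f i) * u i := by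
  rw [sum_mul, mul_sum, ← sum_sub_distrib]
  refine sum_congr rfl fun i _ => ?_
  rw [mul_sub, map_sub, sub_mul, map_mul, map_mul, mul_assoc _ (u i : A), hu, ← mul_assoc,
    ← mul_assoc, ← map_mul φ y, mul_comm y, map_mul]

theorem eq_zero_of_sum_map_mul_units_eq_zero [Nontrivial A] (hτ : Function.Injective τ)
    (hu : ∀ i a, (u i : A) * φ a = φ (τ i a) * u i) {s : Finset ι} {f : ι → L}
    (hf : ∑ i ∈ s, φ (f i) * u i = 0) : ∀ i ∈ s, f i = 0 := by
  classical
  induction s using Finset.induction_on generalizing f with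
  | empty => simp
  | insert j s hj ih =>
    have hs : ∀ k ∈ s, f k = 0 := by
      intro k hk
      obtain ⟨x, hx⟩ : ∃ x, τ k x ≠ τ j x := by
        by_contra! h
        exact ne_of_mem_of_not_mem hk hj (hτ (RingHom.ext h))
      have hsum := sum_map_mul_sub_mul_units φ hu (insert j s) f x (τ j x)
      rw [hf, zero_mul, mul_zero, sub_zero, sum_insert hj, sub_self, mul_zero, map_zero,
        zero_mul, zero_add] at hsum
      simpa [sub_eq_zero, hx] using ih hsum k hk
    have hj0 : φ (f j) * u j = 0 := by
      rwa [sum_insert hj, sum_eq_zero fun k hk => by rw [hs k hk, map_zero, zero_mul],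
        add_zero] at hf
    intro i hi
    rcases mem_insert.mp hi with rfl | hi
    · exact (map_eq_zero φ).mp ((Units.mul_left_eq_zero _).mp hj0)
    · exact hs i hi

end TwistedIndependence

theorem Algebra.mem_center_of_adjoin_eq_top {R A : Type*} [CommSemiring R] [Semiring A]
    [Algebra R A] {s : Set A} (hs : Algebra.adjoin R s = ⊤) {a : A}
    (ha : ∀ b ∈ s, Commute a b) : a ∈ Subalgebra.center R A :=
  Subalgebra.mem_center_iff.mpr fun _ =>
    (commute_of_mem_adjoin_of_forall_mem_commute (hs ▸ Algebra.mem_top) ha).symm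

theorem orderOf_eq_finrank_of_forall_mem_zpowers {K L : Type*} [Field K] [Field L] [Algebra K L]
    [FiniteDimensional K L] [IsGalois K L] {σ : L ≃ₐ[K] L}
    (hσ : ∀ τ : L ≃ₐ[K] L, τ ∈ Subgroup.zpowers σ) : orderOf σ = finrank K L := by
  rw [orderOf_eq_card_of_forall_mem_zpowers hσ, IsGalois.card_aut_eq_finrank]

section CyclicAlgebra

variable {K L A : Type*} [Field K] [Field L] [Ring A] [Algebra K L] [Algebra K A]
  (ι : L →ₐ[K] A) {σ : L ≃ₐ[K] L} {c : A}

theorem semiconjBy_pow_map (hc : ∀ a, SemiconjBy c (ι a) (ι (σ a))) (n : ℕ) (a : L) :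
    SemiconjBy (c ^ n) (ι a) (ι ((σ ^ n) a)) := by
  induction n generalizing a with
  | zero => simp
  | succ n ih =>
    rw [pow_succ', pow_succ', AlgEquiv.mul_apply]
    exact (hc _).mul_left (ih a)

def sumMapMulPow (c : A) (p : ℕ) : (Fin p → L) →ₗ[K] A :=
  ∑ i : Fin p, LinearMap.mulRight K (c ^ (i : ℕ)) ∘ₗ ι.toLinearMap ∘ₗ LinearMap.proj i

theorem sumMapMulPow_apply (p : ℕ) (f : Fin p → L) :
    sumMapMulPow ι c p f = ∑ i : Fin p, ι (f i) * c ^ (i : ℕ) := by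
  simp [sumMapMulPow]

theorem sumMapMulPow_injective [Nontrivial A] {c : Aˣ}
    (hc : ∀ a, SemiconjBy (c : A) (ι a) (ι (σ a))) {p : ℕ} (hp : p ≤ orderOf σ) :
    Function.Injective (sumMapMulPow ι (c : A) p) := by
  have hτ : Function.Injective fun i : Fin p => ((σ ^ (i : ℕ) : L ≃ₐ[K] L) : L →+* L) :=
    fun i j h => Fin.ext <| pow_injOn_Iio_orderOf (x := σ) (by simpa using i.2.trans_le hp)
      (by simpa using j.2.trans_le hp) (AlgEquiv.ext (RingHom.congr_fun h))
  have hu (i : Fin p) (a : L) :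
      ((c ^ (i : ℕ) : Aˣ) : A) * ι a = ι ((σ ^ (i : ℕ)) a) * (c ^ (i : ℕ) : Aˣ) := by
    rw [Units.val_pow_eq_pow_val]
    exact semiconjBy_pow_map ι hc i a
  rw [injective_iff_map_eq_zero]
  intro f hf
  funext i
  refine eq_zero_of_sum_map_mul_units_eq_zero ι.toRingHom hτ hu ?_ i (mem_univ i)
  simpa [sumMapMulPow_apply] using hf

theorem sumMapMulPow_surjective [Nontrivial A] [FiniteDimensional K L] [FiniteDimensional K A]
    {c : Aˣ} (hc : ∀ a, SemiconjBy (c : A) (ι a) (ι (σ a))) {p : ℕ} (hσ : orderOf σ = p)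
    (hL : finrank K L = p) (hA : finrank K A = p ^ 2) :
    Function.Surjective (sumMapMulPow ι (c : A) p) := by
  have hdim : finrank K (Fin p → L) = finrank K A := by
    rw [finrank_pi_fintype, hL, hA]
    simp [sq]
  exact (LinearMap.injective_iff_surjective_of_finrank_eq_finrank hdim).mp
    (sumMapMulPow_injective ι hc hσ.ge)

theorem adjoin_range_union_eq_top {p : ℕ} (h : Function.Surjective (sumMapMulPow ι c p)) :
    Algebra.adjoin K ((Set.range fun x : L => ι x) ∪ {c}) = ⊤ := by
  refine eq_top_iff.mpr fun y _ => ?_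
  obtain ⟨f, rfl⟩ := h y
  rw [sumMapMulPow_apply]
  refine sum_mem fun i _ =>
    mul_mem (Algebra.subset_adjoin ?_) (pow_mem (Algebra.subset_adjoin ?_) _)
  exacts [Or.inl ⟨f i, rfl⟩, Or.inr rfl]

theorem pow_mem_center (hc : ∀ a, SemiconjBy c (ι a) (ι (σ a))) {p : ℕ} (hσ : σ ^ p = 1)
    (hgen : Algebra.adjoin K ((Set.range fun x : L => ι x) ∪ {c}) = ⊤) :
    c ^ p ∈ Subalgebra.center K A := by
  refine Algebra.mem_center_of_adjoin_eq_top hgen ?_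
  rintro _ (⟨a, rfl⟩ | hb)
  · change SemiconjBy _ _ _
    simpa [hσ] using semiconjBy_pow_map ι hc p a
  · exact Set.mem_singleton_iff.mp hb ▸ (Commute.refl c).pow_left p

end CyclicAlgebra

/-- Let `A` be a central simple `K`-algebra of dimension `p²` (`p` prime), `L ⊆ A` a
maximal subfield with `L/K` cyclic Galois generated by `σ`, and `c ∈ A*` with
`c a c⁻¹ = σ(a)` for all `a ∈ L`. Then `1, c, …, c^(p-1)` are linearly independent
over `L`, `L` and `c` generate `A` as a `K`-algebra, and `c^p ∈ K`. -/
theorem skolem_noether_element_properties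
    (K : Type*) [Field K] (p : ℕ) (hp : p.Prime)
    (A : Type*) [Ring A] [Algebra K A] [Algebra.IsCentral K A] [IsSimpleRing A]
    (hdim : Module.finrank K A = p ^ 2)
    (L : Type*) [Field L] [Algebra K L] [IsGalois K L]
    (hL : Module.finrank K L = p)
    (σ : L ≃ₐ[K] L) (hσ : ∀ τ : L ≃ₐ[K] L, τ ∈ Subgroup.zpowers σ)
    (ι : L →ₐ[K] A)
    (c : Aˣ) (hc : ∀ a : L, Units.val c * ι a * Units.val c⁻¹ = ι (σ a)) :
    (∀ f : Fin p → L, (∑ i : Fin p, ι (f i) * (Units.val c) ^ (i : ℕ)) = 0 →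
      ∀ i, f i = 0) ∧
    Algebra.adjoin K ((Set.range fun x : L => ι x) ∪ {Units.val c}) = ⊤ ∧
    ∃ k : K, (Units.val c) ^ p = algebraMap K A k := by
  have : FiniteDimensional K L := Module.finite_of_finrank_pos (hL ▸ hp.pos)
  have : FiniteDimensional K A := Module.finite_of_finrank_pos (hdim ▸ pow_pos hp.pos 2)
  have horder : orderOf σ = p := hL ▸ orderOf_eq_finrank_of_forall_mem_zpowers hσ
  have hsemi : ∀ a, SemiconjBy (c : A) (ι a) (ι (σ a)) :=
    fun a => (Units.mul_inv_eq_iff_eq_mul c).mp (hc a)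
  have hgen := adjoin_range_union_eq_top ι (sumMapMulPow_surjective ι hsemi horder hL hdim)
  refine ⟨fun f hf => ?_, hgen, ?_⟩
  · rw [← sumMapMulPow_apply] at hf
    exact congr_fun ((map_eq_zero_iff _ (sumMapMulPow_injective ι hsemi horder.ge)).mp hf)
  · have hcentral := pow_mem_center ι hsemi (horder ▸ pow_orderOf_eq_one σ) hgen
    exact (Algebra.IsCentral.mem_center_iff K).mp hcentral
end

section
/- Let A be a quaternion algebra over a field K (char ≠ 2), and L = K(√d) ⊆ A. Then the quaternion algebra (−1, d)_K is split at a place where A is split if and only if −1 is a local norm from L; and the normalizer condition: an element u of A* normalizing L induces either the identity or the conjugation on L, and if it induces conjugation then its reduced norm lies in −c²·N_{L/K}(L*) where c is any pure quaternion conjugating L. -/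
/-!
Write `L = K ⊕ K s` with `s² = d`, so that `N(α + β s) = α² - d β²`.

`(-1, d)` is split iff its norm form `t² + x² - d y² - d z²` is isotropic: an isomorphism with
`M₂(K)` produces zero divisors, hence a nonzero element of reduced norm `0`, and dividing norms
from `K(√-1)` turns an isotropic vector into `p² - d q² = -1`. Conversely such `p, q` give a
matrix `I` with `I² = -1` anticommuting with `J = [[0, d], [1, 0]]`, and every algebra map out
of a quaternion algebra is injective.

Since `c` anticommutes with `s`, a dimension count gives `A = ι L ⊕ ι L c`. If `u (ι s) u⁻¹ = ι t`
then `t² = s²`, so `t = ±s`; commuting with `s` kills the `ι L c`-component of `u` and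
anticommuting kills the `ι L`-component. Hence `u = ι l` or `u = ι l · c`, and in the second
case `u ū = ι l · c · (-c) · ι (σ l) = -c² ι (l σ l)` because `c²` is a scalar.
-/

section QuadraticExtension

variable {K L : Type*} [Field K] [Field L] [Algebra K L] {d : K} {s : L}

theorem algebraMap_ne_of_sq_eq (hd : ¬∃ x : K, x ^ 2 = d) (hs : s ^ 2 = algebraMap K L d)
    (r : K) : algebraMap K L r ≠ s := by
  rintro rfl
  exact hd ⟨r, (algebraMap K L).injective (by rw [map_pow, hs])⟩

theorem linearIndependent_one_of_sq_eq (hd : ¬∃ x : K, x ^ 2 = d)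
    (hs : s ^ 2 = algebraMap K L d) : LinearIndependent K ![1, s] :=
  (LinearIndependent.pair_iff' one_ne_zero).2 fun r => by
    simpa [Algebra.algebraMap_eq_smul_one] using algebraMap_ne_of_sq_eq hd hs r

noncomputable def sqrtBasis (hd : ¬∃ x : K, x ^ 2 = d) (hs : s ^ 2 = algebraMap K L d)
    (hL : Module.finrank K L = 2) : Module.Basis (Fin 2) K L :=
  basisOfLinearIndependentOfCardEqFinrank (linearIndependent_one_of_sq_eq hd hs) (by simp [hL])

theorem coe_sqrtBasis (hd : ¬∃ x : K, x ^ 2 = d) (hs : s ^ 2 = algebraMap K L d)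
    (hL : Module.finrank K L = 2) : ⇑(sqrtBasis hd hs hL) = ![1, s] :=
  coe_basisOfLinearIndependentOfCardEqFinrank _ _

theorem sqrtBasis_repr_algebraMap_add_smul (hd : ¬∃ x : K, x ^ 2 = d)
    (hs : s ^ 2 = algebraMap K L d) (hL : Module.finrank K L = 2) (α β : K) :
    ⇑((sqrtBasis hd hs hL).repr (algebraMap K L α + β • s)) = ![α, β] := by
  convert (sqrtBasis hd hs hL).repr_sum_self ![α, β]
  simp [coe_sqrtBasis, Algebra.algebraMap_eq_smul_one]

theorem exists_eq_algebraMap_add_smul (hd : ¬∃ x : K, x ^ 2 = d) (hs : s ^ 2 = algebraMap K L d)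
    (hL : Module.finrank K L = 2) (x : L) : ∃ α β : K, x = algebraMap K L α + β • s := by
  refine ⟨(sqrtBasis hd hs hL).repr x 0, (sqrtBasis hd hs hL).repr x 1, ?_⟩
  conv_lhs => rw [← (sqrtBasis hd hs hL).sum_repr x]
  simp [coe_sqrtBasis, Algebra.algebraMap_eq_smul_one]

theorem norm_algebraMap_add_smul (hd : ¬∃ x : K, x ^ 2 = d) (hs : s ^ 2 = algebraMap K L d)
    (hL : Module.finrank K L = 2) (α β : K) :
    Algebra.norm K (algebraMap K L α + β • s) = α ^ 2 - d * β ^ 2 := by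
  have hmul_sqrt : (algebraMap K L α + β • s) * s = algebraMap K L (d * β) + α • s := by
    simp only [add_mul, Algebra.smul_def, map_mul]
    linear_combination algebraMap K L β * hs
  rw [Algebra.norm_eq_matrix_det (sqrtBasis hd hs hL), Matrix.det_fin_two]
  simp only [Algebra.leftMulMatrix_eq_repr_mul, coe_sqrtBasis, Matrix.cons_val_zero,
    Matrix.cons_val_one, mul_one, hmul_sqrt, sqrtBasis_repr_algebraMap_add_smul]
  ring

theorem exists_norm_eq_neg_one_iff (hd : ¬∃ x : K, x ^ 2 = d) (hs : s ^ 2 = algebraMap K L d)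
    (hL : Module.finrank K L = 2) :
    (∃ l : L, l ≠ 0 ∧ Algebra.norm K l = -1) ↔ ∃ p q : K, p ^ 2 - d * q ^ 2 = -1 := by
  constructor
  · rintro ⟨l, -, hl⟩
    obtain ⟨p, q, rfl⟩ := exists_eq_algebraMap_add_smul hd hs hL l
    exact ⟨p, q, by rwa [norm_algebraMap_add_smul hd hs hL] at hl⟩
  · rintro ⟨p, q, hpq⟩
    have : Module.Finite K L := Module.finite_of_finrank_eq_succ hL
    refine ⟨algebraMap K L p + q • s, fun h0 => ?_, by rw [norm_algebraMap_add_smul hd hs hL, hpq]⟩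
    have := congrArg (Algebra.norm K) h0
    rw [norm_algebraMap_add_smul hd hs hL, hpq, Algebra.norm_zero] at this
    exact neg_ne_zero.2 one_ne_zero this

theorem AlgEquiv.apply_eq_neg_of_sq_eq (hd : ¬∃ x : K, x ^ 2 = d) (hs : s ^ 2 = algebraMap K L d)
    (hL : Module.finrank K L = 2) {σ : L ≃ₐ[K] L} (hσ : σ ≠ AlgEquiv.refl) : σ s = -s := by
  have hsq : σ s ^ 2 = s ^ 2 := by rw [← map_pow, hs, AlgEquiv.commutes]
  refine (sq_eq_sq_iff_eq_or_eq_neg.1 hsq).resolve_left fun hfix => hσ ?_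
  refine AlgEquiv.toLinearMap_injective ((sqrtBasis hd hs hL).ext fun i => ?_)
  fin_cases i <;> simp [coe_sqrtBasis, hfix]

end QuadraticExtension

namespace QuaternionAlgebra

variable {R : Type*} [Field R] {c₁ c₂ c₃ : R}

theorem star_eq_neg_of_re_eq_zero {w : QuaternionAlgebra R c₁ 0 c₃} (hw : w.re = 0) :
    star w = -w := by
  rw [star_eq_two_re_sub, hw]
  simp

theorem re_eq_zero_of_mul_self_eq_coe (h2 : (2 : R) ≠ 0) {w : QuaternionAlgebra R c₁ 0 c₃}
    {r : R} (hw : w * w = r) (hne : w ≠ w.re) : w.re = 0 := by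
  by_contra hre
  refine hne (eq_re_of_eq_coe (x := (2 * w.re)⁻¹ * (r + (w * star w).re)) ?_)
  have h : (2 * w.re) • w = ↑(r + (w * star w).re) := by
    rw [← mul_coe_eq_smul, coe_add, ← mul_star_eq_coe, ← hw, ← mul_add, self_add_star']
    simp
  rw [coe_mul, ← h, ← coe_mul_eq_smul, ← mul_assoc, ← coe_mul,
    inv_mul_cancel₀ (mul_ne_zero h2 hre), coe_one, one_mul]

theorem re_star_mul_self_eq_zero_of_mul_eq_zero {a b : QuaternionAlgebra R c₁ c₂ c₃}
    (hab : a * b = 0) (hb : b ≠ 0) : (star a * a).re = 0 := by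
  set n := (star a * a).re with hn
  by_contra h
  apply hb
  calc b = ((n⁻¹ * n : R) : QuaternionAlgebra R c₁ c₂ c₃) * b := by
        rw [inv_mul_cancel₀ h, coe_one, one_mul]
    _ = (n⁻¹ : R) * (star a * (a * b)) := by
        rw [coe_mul, hn, ← star_mul_eq_coe, mul_assoc, mul_assoc]
    _ = 0 := by rw [hab, mul_zero, mul_zero]

/-- Averaging `w` over conjugation by `i`, `j`, `k` kills its imaginary part. -/
theorem algebraMap_four_mul_re (hc₁ : c₁ ≠ 0) (hc₃ : c₃ ≠ 0) (w : QuaternionAlgebra R c₁ 0 c₃) :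
    algebraMap R _ (4 * w.re) = w + c₁⁻¹ • (⟨0, 1, 0, 0⟩ * w * ⟨0, 1, 0, 0⟩)
      + c₃⁻¹ • (⟨0, 0, 1, 0⟩ * w * ⟨0, 0, 1, 0⟩)
      - (c₁ * c₃)⁻¹ • (⟨0, 0, 0, 1⟩ * w * ⟨0, 0, 0, 1⟩) := by
  ext <;> simp [algebraMap_eq] <;> field_simp <;> ring

theorem algHom_injective {B : Type*} [Ring B] [Nontrivial B] [Algebra R B] (h2 : (2 : R) ≠ 0)
    (hc₁ : c₁ ≠ 0) (hc₃ : c₃ ≠ 0) (f : QuaternionAlgebra R c₁ 0 c₃ →ₐ[R] B) :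
    Function.Injective f := by
  have re_eq_zero (w) (hw : f w = 0) : w.re = 0 := by
    have h : algebraMap R B (4 * w.re) = 0 := by
      simp [← f.commutes, algebraMap_four_mul_re hc₁ hc₃, hw]
    have h4 : (4 : R) ≠ 0 := by
      simpa [← two_mul, show (2 * 2 : R) = 4 by norm_num] using mul_ne_zero h2 h2
    exact (mul_eq_zero.1 ((map_eq_zero_iff _ (algebraMap R B).injective).1 h)).resolve_left h4
  refine (injective_iff_map_eq_zero f).2 fun w hw => ?_
  have hmul (v) : f (w * v) = 0 := by rw [map_mul, hw, zero_mul]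
  have hi := re_eq_zero _ (hmul ⟨0, 1, 0, 0⟩)
  have hj := re_eq_zero _ (hmul ⟨0, 0, 1, 0⟩)
  have hk := re_eq_zero _ (hmul ⟨0, 0, 0, 1⟩)
  simp [hc₁, hc₃] at hi hj hk
  ext <;> simp [re_eq_zero w hw, hi, hj, hk]

end QuaternionAlgebra

section SplitCriterion

variable {K : Type*} [Field K] {d : K}

theorem exists_sq_sub_mul_sq_eq_neg_one_of_sq_add_sq (hd : ¬∃ x : K, x ^ 2 = d) {u v : K}
    (huv : d = u ^ 2 + v ^ 2) : ∃ p q : K, p ^ 2 - d * q ^ 2 = -1 := by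
  have hv : v ≠ 0 := fun hv => hd ⟨u, by simp [huv, hv]⟩
  exact ⟨u / v, 1 / v, by field_simp; linear_combination -huv⟩

theorem exists_sq_sub_mul_sq_eq_neg_one_of_isotropic (hd : ¬∃ x : K, x ^ 2 = d) {t x y z : K}
    (h : t ^ 2 + x ^ 2 = d * (y ^ 2 + z ^ 2)) (hne : ¬(t = 0 ∧ x = 0 ∧ y = 0 ∧ z = 0)) :
    ∃ p q : K, p ^ 2 - d * q ^ 2 = -1 := by
  by_cases hi : ∃ e : K, e ^ 2 = -1
  · obtain ⟨e, he⟩ := hi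
    exact ⟨e, 0, by simp [he]⟩
  have sq_add_sq_eq_zero {a b : K} (hab : a ^ 2 + b ^ 2 = 0) : a = 0 ∧ b = 0 := by
    by_cases hb : b = 0
    · exact ⟨by simpa [hb] using hab, hb⟩
    · exact absurd ⟨a / b, by field_simp; linear_combination hab⟩ hi
  have hyz : y ^ 2 + z ^ 2 ≠ 0 := fun hyz => hne <| by
    obtain ⟨rfl, rfl⟩ := sq_add_sq_eq_zero hyz
    obtain ⟨rfl, rfl⟩ := sq_add_sq_eq_zero (by simpa using h)
    simp
  -- `d` is the norm from `K(√-1)` of `(t + x√-1) / (y + z√-1)`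
  refine exists_sq_sub_mul_sq_eq_neg_one_of_sq_add_sq hd
    (u := (t * y + x * z) / (y ^ 2 + z ^ 2)) (v := (x * y - t * z) / (y ^ 2 + z ^ 2)) ?_
  field_simp
  linear_combination (-(y ^ 2 + z ^ 2)) * h

theorem exists_sq_sub_mul_sq_eq_neg_one_of_algEquiv_matrix (hd : ¬∃ x : K, x ^ 2 = d)
    (e : QuaternionAlgebra K (-1) 0 d ≃ₐ[K] Matrix (Fin 2) (Fin 2) K) :
    ∃ p q : K, p ^ 2 - d * q ^ 2 = -1 := by
  have hsingle (i : Fin 2) : e.symm (Matrix.single i i 1) ≠ 0 := by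
    simpa using fun h => by simpa using congr_fun₂ h i i
  set w := e.symm (Matrix.single 0 0 1)
  have hzero : (star w * w).re = 0 :=
    QuaternionAlgebra.re_star_mul_self_eq_zero_of_mul_eq_zero (by simp [w, ← map_mul]) (hsingle 1)
  refine exists_sq_sub_mul_sq_eq_neg_one_of_isotropic hd (t := w.re) (x := w.imI)
    (y := w.imJ) (z := w.imK) ?_
    fun h => hsingle 0 (QuaternionAlgebra.ext h.1 h.2.1 h.2.2.1 h.2.2.2)
  simp at hzero
  linear_combination hzero

theorem nonempty_algEquiv_matrix_of_sq_sub_mul_sq_eq_neg_one (h2 : (2 : K) ≠ 0)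
    (hd : ¬∃ x : K, x ^ 2 = d) {p q : K} (hpq : p ^ 2 - d * q ^ 2 = -1) :
    Nonempty (QuaternionAlgebra K (-1) 0 d ≃ₐ[K] Matrix (Fin 2) (Fin 2) K) := by
  have hd0 : d ≠ 0 := fun h => hd ⟨0, by simp [h]⟩
  -- trace `0` and determinant `d q² - p² = 1` give `I² = -1` (Cayley–Hamilton)
  let I : Matrix (Fin 2) (Fin 2) K := !![p, -(d * q); q, -p]
  let J : Matrix (Fin 2) (Fin 2) K := !![0, d; 1, 0]
  let B : QuaternionAlgebra.Basis (Matrix (Fin 2) (Fin 2) K) (-1) 0 d :=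
    { i := I, j := J, k := I * J
      i_mul_i := by
        ext i j; fin_cases i <;> fin_cases j <;> simp [I] <;>
          first | ring1 | linear_combination hpq
      j_mul_j := by ext i j; fin_cases i <;> fin_cases j <;> simp [J]
      i_mul_j := rfl
      j_mul_i := by ext i j; fin_cases i <;> fin_cases j <;> simp [I, J] <;> ring }
  have hinj := QuaternionAlgebra.algHom_injective h2 (neg_ne_zero.2 one_ne_zero) hd0 B.liftHom
  have hsurj : Function.Surjective B.liftHom :=
    (LinearMap.injective_iff_surjective_of_finrank_eq_finrank (f := B.liftHom.toLinearMap)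
      (by simp [QuaternionAlgebra.finrank_eq_four, Module.finrank_matrix])).1 hinj
  exact ⟨AlgEquiv.ofBijective B.liftHom ⟨hinj, hsurj⟩⟩

theorem nonempty_algEquiv_matrix_iff (h2 : (2 : K) ≠ 0) (hd : ¬∃ x : K, x ^ 2 = d) :
    Nonempty (QuaternionAlgebra K (-1) 0 d ≃ₐ[K] Matrix (Fin 2) (Fin 2) K) ↔
      ∃ p q : K, p ^ 2 - d * q ^ 2 = -1 :=
  ⟨fun ⟨e⟩ => exists_sq_sub_mul_sq_eq_neg_one_of_algEquiv_matrix hd e,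
    fun ⟨_, _, hpq⟩ => nonempty_algEquiv_matrix_of_sq_sub_mul_sq_eq_neg_one h2 hd hpq⟩

end SplitCriterion

theorem eq_zero_of_map_mul_eq_zero {L A F : Type*} [DivisionRing L] [Ring A] [FunLike F L A]
    [RingHomClass F L A] (f : F) {c : A} (hc : c ≠ 0) {x : L} (h : f x * c = 0) : x = 0 := by
  by_contra hx
  apply hc
  rw [← one_mul c, ← map_one f, ← inv_mul_cancel₀ hx, map_mul, mul_assoc, h, mul_zero]

section Normalizer

variable {K L A : Type*} [Field K] [Field L] [Algebra K L] [Ring A] [Algebra K A]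
  (ι : L →ₐ[K] A) {s : L} {c : A}

theorem map_mul_add_map_mul (x y : L) :
    ι s * (ι x + ι y * c) = ι (s * x) + ι (s * y) * c := by
  simp only [map_mul, mul_add, mul_assoc]

theorem add_map_mul_mul_map (hcs : c * ι s = -(ι s * c)) (x y : L) :
    (ι x + ι y * c) * ι s = ι (s * x) - ι (s * y) * c := by
  rw [add_mul, mul_assoc, hcs, ← map_mul, mul_comm x, mul_neg, ← mul_assoc, ← map_mul,
    mul_comm y, sub_eq_add_neg]

theorem eq_zero_of_commute_map_add_map_mul (h2 : (2 : L) ≠ 0) (hs0 : s ≠ 0) (hc : c ≠ 0)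
    (hcs : c * ι s = -(ι s * c)) {x y : L}
    (h : (ι x + ι y * c) * ι s = ι s * (ι x + ι y * c)) : y = 0 := by
  rw [map_mul_add_map_mul, add_map_mul_mul_map ι hcs, sub_eq_add_neg, add_right_inj,
    neg_eq_iff_add_eq_zero, ← add_mul, ← map_add, ← two_mul] at h
  simpa [h2, hs0] using eq_zero_of_map_mul_eq_zero ι hc h

theorem eq_zero_of_anticommute_map_add_map_mul [Nontrivial A] (h2 : (2 : L) ≠ 0) (hs0 : s ≠ 0)
    (hcs : c * ι s = -(ι s * c)) {x y : L}
    (h : (ι x + ι y * c) * ι s = -(ι s * (ι x + ι y * c))) : x = 0 := by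
  rw [map_mul_add_map_mul, add_map_mul_mul_map ι hcs, neg_add, sub_eq_add_neg, add_left_inj,
    eq_neg_iff_add_eq_zero, ← map_add, ← two_mul, map_eq_zero_iff ι ι.toRingHom.injective] at h
  simpa [h2, hs0] using h

theorem exists_eq_map_add_map_mul (h2 : (2 : L) ≠ 0) (hs0 : s ≠ 0) (hc : c ≠ 0)
    (hcs : c * ι s = -(ι s * c)) (hL : Module.finrank K L = 2) (hA : Module.finrank K A = 4)
    (X : A) : ∃ x y : L, X = ι x + ι y * c := by
  have : Nontrivial A := ⟨⟨c, 0, hc⟩⟩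
  have : Module.Finite K L := Module.finite_of_finrank_eq_succ hL
  have : Module.Finite K A := Module.finite_of_finrank_eq_succ hA
  let φ : L × L →ₗ[K] A := ι.toLinearMap.coprod ((LinearMap.mulRight K c).comp ι.toLinearMap)
  have hφ : Function.Injective φ := by
    refine (injective_iff_map_eq_zero φ).2 fun ⟨x, y⟩ hxy => ?_
    replace hxy : ι x + ι y * c = 0 := hxy
    have hy := eq_zero_of_commute_map_add_map_mul ι h2 hs0 hc hcs
      (by rw [hxy, zero_mul, mul_zero])
    have hx := eq_zero_of_anticommute_map_add_map_mul ι h2 hs0 hcs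
      (by rw [hxy, zero_mul, mul_zero, neg_zero])
    simp [hx, hy]
  obtain ⟨⟨x, y⟩, hxy⟩ := (LinearMap.injective_iff_surjective_of_finrank_eq_finrank
    (by simp [Module.finrank_prod, hL, hA])).1 hφ X
  exact ⟨x, y, hxy.symm⟩

theorem exists_eq_map_or_exists_eq_map_mul {d : K} (hs : s ^ 2 = algebraMap K L d)
    (h2 : (2 : L) ≠ 0) (hs0 : s ≠ 0) (hc : c ≠ 0)
    (hcs : c * ι s = -(ι s * c)) (hL : Module.finrank K L = 2) (hA : Module.finrank K A = 4)
    (u : Aˣ) {t : L} (ht : u * ι s = ι t * u) :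
    (∃ x, (u : A) = ι x) ∨ ∃ y, (u : A) = ι y * c := by
  have : Nontrivial A := ⟨⟨c, 0, hc⟩⟩
  have ht2 : t ^ 2 = s ^ 2 := by
    have : ι (t ^ 2) * u = ι (s ^ 2) * u :=
      calc ι (t ^ 2) * u = u * ι (s ^ 2) := by
            rw [pow_two, pow_two, map_mul, map_mul, mul_assoc, ← ht, ← mul_assoc, ← ht, mul_assoc]
        _ = ι (s ^ 2) * u := by rw [hs, ι.commutes, Algebra.commutes]
    exact (ι : L →+* A).injective ((Units.mul_left_inj u).1 this)
  obtain ⟨x, y, hu⟩ := exists_eq_map_add_map_mul ι h2 hs0 hc hcs hL hA u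
  rw [hu] at ht ⊢
  rcases sq_eq_sq_iff_eq_or_eq_neg.1 ht2 with rfl | rfl
  · left
    refine ⟨x, ?_⟩
    rw [eq_zero_of_commute_map_add_map_mul ι h2 hs0 hc hcs ht, map_zero, zero_mul, add_zero]
  · right
    refine ⟨y, ?_⟩
    rw [map_neg, neg_mul] at ht
    rw [eq_zero_of_anticommute_map_add_map_mul ι h2 hs0 hcs ht, map_zero, zero_add]

end Normalizer

section QuaternionSubfield

variable {K L : Type*} [Field K] [Field L] [Algebra K L] {a b : K}
  (ι : L →ₐ[K] QuaternionAlgebra K a 0 b)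

theorem star_map_eq_map_apply {d : K} {s : L} (h2 : (2 : K) ≠ 0) (hd : ¬∃ x : K, x ^ 2 = d)
    (hs : s ^ 2 = algebraMap K L d) (hL : Module.finrank K L = 2) {σ : L ≃ₐ[K] L}
    (hσ : σ ≠ AlgEquiv.refl) (x : L) : star (ι x) = ι (σ x) := by
  have hre : (ι s).re = 0 := by
    refine QuaternionAlgebra.re_eq_zero_of_mul_self_eq_coe h2 (r := d) ?_ fun h => ?_
    · rw [← map_mul, ← pow_two, hs, ι.commutes, QuaternionAlgebra.coe_algebraMap]
    · refine algebraMap_ne_of_sq_eq hd hs (ι s).re (ι.toRingHom.injective ?_)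
      simpa [QuaternionAlgebra.coe_algebraMap] using h.symm
  obtain ⟨α, β, rfl⟩ := exists_eq_algebraMap_add_smul hd hs hL x
  simp [σ.apply_eq_neg_of_sq_eq hd hs hL hσ, QuaternionAlgebra.star_eq_neg_of_re_eq_zero hre,
    QuaternionAlgebra.coe_algebraMap]

theorem map_mul_mul_star_eq (σ : L ≃ₐ[K] L) (hstar : ∀ x, star (ι x) = ι (σ x))
    {c : QuaternionAlgebra K a 0 b} (hc : c.re = 0) (y : L) :
    ι y * c * star (ι y * c) = -(c * c) * ι (y * σ y) := by
  have hstar_c := QuaternionAlgebra.star_eq_neg_of_re_eq_zero hc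
  have hcc : c * c = ↑(-(c * star c).re) := by
    rw [QuaternionAlgebra.coe_neg, ← QuaternionAlgebra.mul_star_eq_coe, hstar_c, mul_neg, neg_neg]
  calc ι y * c * star (ι y * c) = -(ι y * (c * c) * ι (σ y)) := by
        rw [star_mul, hstar_c, hstar]; noncomm_ring
    _ = -(c * c) * ι (y * σ y) := by
        rw [hcc, ← QuaternionAlgebra.coe_commutes, map_mul]; noncomm_ring

end QuaternionSubfield

theorem split_criterion_and_normalizer_general
    (K : Type*) [Field K] (h2 : (2 : K) ≠ 0) (a b : K)
    (d : K) (hd : ¬∃ x : K, x ^ 2 = d)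
    (L : Type*) [Field L] [Algebra K L] (hL : Module.finrank K L = 2)
    (s : L) (hs : s ^ 2 = algebraMap K L d)
    (σ : L ≃ₐ[K] L) (hσ : σ ≠ AlgEquiv.refl)
    (ι : L →ₐ[K] QuaternionAlgebra K a 0 b)
    (c : QuaternionAlgebra K a 0 b) (hc0 : c ≠ 0) (hcpure : c.re = 0)
    (hcconj : ∀ x : L, c * ι x = ι (σ x) * c) :
    (Nonempty (QuaternionAlgebra K (-1) 0 d ≃ₐ[K] Matrix (Fin 2) (Fin 2) K) ↔
      ∃ l : L, l ≠ 0 ∧ Algebra.norm K l = -1) ∧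
    ∀ u : (QuaternionAlgebra K a 0 b)ˣ,
      (∀ x : L, ∃ y : L, Units.val u * ι x = ι y * Units.val u) →
      ((∀ x : L, Units.val u * ι x = ι x * Units.val u) ∨
        ((∀ x : L, Units.val u * ι x = ι (σ x) * Units.val u) ∧
          ∃ l : L, l ≠ 0 ∧
            Units.val u * star (Units.val u) = -(c * c) * ι (l * σ l))) := by
  refine ⟨(nonempty_algEquiv_matrix_iff h2 hd).trans (exists_norm_eq_neg_one_iff hd hs hL).symm,
    fun u hu => ?_⟩
  have h2L : (2 : L) ≠ 0 := by
    rw [← map_ofNat (algebraMap K L) 2]; exact (map_ne_zero _).2 h2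
  have hs0 : s ≠ 0 := fun h => algebraMap_ne_of_sq_eq hd hs 0 (by simp [h])
  have hcs : c * ι s = -(ι s * c) := by
    rw [hcconj, σ.apply_eq_neg_of_sq_eq hd hs hL hσ, map_neg, neg_mul]
  obtain ⟨t, ht⟩ := hu s
  rcases exists_eq_map_or_exists_eq_map_mul ι hs h2L hs0 hc0 hcs hL
    (QuaternionAlgebra.finrank_eq_four a 0 b) u ht with ⟨x, hx⟩ | ⟨y, hy⟩
  · exact .inl fun z => by rw [hx, ← map_mul, mul_comm, map_mul]
  · refine .inr ⟨fun z => by rw [hy, mul_assoc, hcconj, ← mul_assoc, ← map_mul, mul_comm,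
      map_mul, mul_assoc], y, fun h => u.ne_zero (by simp [hy, h]), ?_⟩
    rw [hy, map_mul_mul_star_eq ι σ (star_map_eq_map_apply ι h2 hd hs hL hσ) hcpure]

/-- Let `A = ℍ[K,a,b]` be a quaternion algebra over a field `K` (char ≠ 2) and
`L = K(√d) ⊆ A`. Then `(−1,d)_K` is split iff `−1` is a norm from `L`; moreover any
`u ∈ A*` normalizing `L` induces either the identity or the conjugation on `L`, and
if it induces the conjugation then its reduced norm `u · star u` lies in
`−c² · N_{L/K}(L*)`, where `c` is a pure quaternion conjugating `L`. -/
theorem split_criterion_and_normalizer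
    (K : Type*) [Field K] (h2 : (2 : K) ≠ 0) (a b : K)
    (d : K) (hd : ¬∃ x : K, x ^ 2 = d)
    (L : Type*) [Field L] [Algebra K L] (hL : Module.finrank K L = 2)
    (s : L) (hs : s ^ 2 = algebraMap K L d) (hgen : Algebra.adjoin K {s} = ⊤)
    (σ : L ≃ₐ[K] L) (hσ : σ ≠ AlgEquiv.refl)
    (ι : L →ₐ[K] QuaternionAlgebra K a 0 b)
    (c : QuaternionAlgebra K a 0 b) (hc0 : c ≠ 0) (hcpure : c.re = 0)
    (hcconj : ∀ x : L, c * ι x = ι (σ x) * c) :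
    (Nonempty (QuaternionAlgebra K (-1) 0 d ≃ₐ[K] Matrix (Fin 2) (Fin 2) K) ↔
      ∃ l : L, l ≠ 0 ∧ Algebra.norm K l = -1) ∧
    ∀ u : (QuaternionAlgebra K a 0 b)ˣ,
      (∀ x : L, ∃ y : L, Units.val u * ι x = ι y * Units.val u) →
      ((∀ x : L, Units.val u * ι x = ι x * Units.val u) ∨
        ((∀ x : L, Units.val u * ι x = ι (σ x) * Units.val u) ∧
          ∃ l : L, l ≠ 0 ∧
            Units.val u * star (Units.val u) = -(c * c) * ι (l * σ l))) :=
  split_criterion_and_normalizer_general K h2 a b d hd L hL s hs σ hσ ι c hc0 hcpure hcconj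
end

section
/- Let D be a central division algebra over a nonarchimedean local field K. Then D contains a unique maximal order, namely the set of elements of D integral over O_K, which equals {x ∈ D : |x| ≤ 1} for the extended absolute value. -/
/-- The set of elements of `D` integral over the subring `O` of `K`. -/
def integralSet (K : Type*) [Field K] (O : Subring K)
    (D : Type*) [Ring D] [Algebra K D] : Set D :=
  letI : Algebra O D :=
    ((algebraMap K D).comp O.subtype).toAlgebra' (fun c x => Algebra.commutes (c : K) x)
  {x : D | IsIntegral O x}


/-! The nonarchimedean norm of `K` makes the multiplicative norm of `D` ultrametric (for a normed
division ring this only depends on the norms of the integers), so the closed unit ball of `D` is a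
subring. An order lies in a finitely generated `O`-module, whose elements have bounded norm; hence
its elements have bounded powers and norm at most `1`. Conversely, by finite-dimensionality the
unit ball lies in the `O`-span of a rescaled basis, so it is itself an order, and therefore the
unique maximal one. The same boundedness argument puts the integral elements, whose powers span a
finitely generated `O`-module, inside the ball; and since `K` is locally compact, `O` is a discrete
valuation ring, hence noetherian, so the ball is a finite `O`-algebra and its elements are
integral. -/

open Metric

section SpanBounds

variable {K : Type*} [NormedField K] {O : Subring K}

theorem norm_le_sum_norm_of_mem_span {E : Type*} [SeminormedAddCommGroup E] [NormedSpace K E]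
    (hO : ∀ c ∈ O, ‖c‖ ≤ 1) {t : Finset E} {v : E} (hv : v ∈ Submodule.span O (t : Set E)) :
    ‖v‖ ≤ ∑ a ∈ t, ‖a‖ := by
  obtain ⟨f, -, rfl⟩ := Submodule.mem_span_finset.mp hv
  refine (norm_sum_le _ _).trans (Finset.sum_le_sum fun a _ => ?_)
  rw [Subring.smul_def, norm_smul]
  exact mul_le_of_le_one_left (norm_nonneg a) (hO _ (f a).2)

theorem norm_le_one_of_forall_pow_mem_span {D : Type*} [NormedDivisionRing D] [NormedAlgebra K D]
    (hO : ∀ c ∈ O, ‖c‖ ≤ 1) {t : Finset D} {x : D}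
    (hx : ∀ n : ℕ, x ^ n ∈ Submodule.span O (t : Set D)) : ‖x‖ ≤ 1 := by
  by_contra! h
  obtain ⟨n, hn⟩ := pow_unbounded_of_one_lt (∑ a ∈ t, ‖a‖) h
  exact hn.not_ge (norm_pow x n ▸ norm_le_sum_norm_of_mem_span hO (hx n))

end SpanBounds

theorem exists_finset_closedBall_subset_span {K : Type*} [NontriviallyNormedField K]
    [CompleteSpace K] {O : Subring K} (hO : ∀ c : K, ‖c‖ ≤ 1 → c ∈ O) {E : Type*}
    [NormedAddCommGroup E] [NormedSpace K E] [FiniteDimensional K E] :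
    ∃ t : Finset E, closedBall (0 : E) 1 ⊆ Submodule.span O (t : Set E) := by
  classical
  let b := Module.finBasis K E
  let L : E →L[K] (Fin _ → K) := LinearMap.toContinuousLinearMap b.equivFun.toLinearMap
  obtain ⟨c, hc⟩ := NormedField.exists_lt_norm K ‖L‖
  have hc0 : c ≠ 0 := norm_pos_iff.mp ((norm_nonneg L).trans_lt hc)
  refine ⟨Finset.univ.image fun i => c • b i, fun x hx => ?_⟩
  have hcoord (i) : ‖b.repr x i / c‖ ≤ 1 := by
    rw [norm_div, div_le_one (norm_pos_iff.mpr hc0)]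
    calc ‖b.repr x i‖ ≤ ‖L x‖ := norm_le_pi_norm (L x) i
      _ ≤ ‖L‖ * ‖x‖ := L.le_opNorm x
      _ ≤ ‖L‖ := mul_le_of_le_one_right (norm_nonneg _) (mem_closedBall_zero_iff.mp hx)
      _ ≤ ‖c‖ := hc.le
  rw [← b.sum_repr x]
  refine Submodule.sum_mem _ fun i _ => ?_
  rw [← div_mul_cancel₀ (b.repr x i) hc0, mul_smul]
  exact Submodule.smul_of_tower_mem _ (⟨_, hO _ (hcoord i)⟩ : O)
    (Submodule.subset_span (Finset.mem_image_of_mem _ (Finset.mem_univ i)))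

def Subring.unitClosedBall (R : Type*) [SeminormedRing R] [NormOneClass R] [IsUltrametricDist R] :
    Subring R where
  toSubmonoid := Submonoid.unitClosedBall R
  add_mem' {a b} ha hb := mem_closedBall_zero_iff.mpr <|
    (IsUltrametricDist.norm_add_le_max a b).trans (max_le
      (mem_closedBall_zero_iff.mp ha) (mem_closedBall_zero_iff.mp hb))
  zero_mem' := mem_closedBall_self zero_le_one
  neg_mem' ha := by simpa using ha

@[simp]
theorem Subring.mem_unitClosedBall {R : Type*} [SeminormedRing R] [NormOneClass R]
    [IsUltrametricDist R] {x : R} : x ∈ Subring.unitClosedBall R ↔ ‖x‖ ≤ 1 :=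
  mem_closedBall_zero_iff

theorem algebraMap_mem_unitClosedBall {K : Type*} [NormedField K] {R : Type*} [SeminormedRing R]
    [NormOneClass R] [NormedAlgebra K R] [IsUltrametricDist R] {c : K} (hc : ‖c‖ ≤ 1) :
    algebraMap K R c ∈ Subring.unitClosedBall R := by
  simpa [norm_algebraMap'] using hc

theorem isPrincipalIdealRing_of_forall_mem_iff_norm_le_one {K : Type*} [NontriviallyNormedField K]
    [IsUltrametricDist K] [ProperSpace K] {O : Subring K} (hO : ∀ x : K, x ∈ O ↔ ‖x‖ ≤ 1) :
    IsPrincipalIdealRing O := by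
  open scoped NormedField Valued in
  obtain rfl : O = 𝒪[K] := Subring.ext fun x => (hO x).trans Valued.integer.mem_iff.symm
  have : CompactSpace 𝒪[K] := isCompact_iff_compactSpace.mp <| by
    convert isCompact_closedBall (0 : K) 1
    ext x
    simp [hO]
  exact Valued.integer.isPrincipalIdealRing_of_compactSpace

section Lattices

variable {K : Type*} [Field K] {O : Subring K} {A : Type*} [Ring A] [Algebra K A]

/- `IsFullLattice` and `integralSet` let `O` act on `A` by `c • x = algebraMap K A c * x` rather
than through Mathlib's instance `(c : K) • x`: the two actions agree only propositionally, their
`algebraMap`s definitionally. -/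
theorem isFullLattice_iff {s : Set A} :
    IsFullLattice K O s ↔
      (∃ t : Finset A, s ⊆ Submodule.span O (t : Set A)) ∧ Submodule.span K s = ⊤ := by
  have : (((algebraMap K A).comp O.subtype).toAlgebra'
      fun c x => Algebra.commutes (c : K) x).toModule = (inferInstance : Module O A) :=
    Module.ext' _ _ fun c x => (Algebra.smul_def (c : K) x).symm
  unfold IsFullLattice
  rw [this]

theorem mem_integralSet_iff {x : A} : x ∈ integralSet K O A ↔ IsIntegral O x :=
  Iff.rfl

end Lattices

theorem IsOrder.subset_closedBall {K : Type*} [NormedField K] {O : Subring K}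
    (hO : ∀ c ∈ O, ‖c‖ ≤ 1) {D : Type*} [NormedDivisionRing D] [NormedAlgebra K D]
    {𝔇 : Subring D} (h : IsOrder K O 𝔇) :
    (𝔇 : Set D) ⊆ closedBall 0 1 := fun x hx => by
  obtain ⟨t, ht⟩ := (isFullLattice_iff.mp h.1).1
  exact mem_closedBall_zero_iff.mpr
    (norm_le_one_of_forall_pow_mem_span hO fun n => ht (pow_mem hx n))

section Orders

variable {K : Type*} [NontriviallyNormedField K] [CompleteSpace K] {O : Subring K}
  (hO : ∀ c : K, c ∈ O ↔ ‖c‖ ≤ 1) {D : Type*} [NormedDivisionRing D] [NormedAlgebra K D]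
  [FiniteDimensional K D] [IsUltrametricDist D]
include hO

theorem isOrder_unitClosedBall : IsOrder K O (Subring.unitClosedBall D) := by
  refine ⟨isFullLattice_iff.mpr ⟨exists_finset_closedBall_subset_span fun c => (hO c).mpr, ?_⟩,
    fun c hc x hx => mul_mem (algebraMap_mem_unitClosedBall ((hO c).mp hc)) hx⟩
  exact Submodule.eq_top_of_nonempty_interior' _ ⟨0, interior_mono Submodule.subset_span
    (mem_interior_iff_mem_nhds.mpr (closedBall_mem_nhds 0 one_pos))⟩

theorem isMaximalOrder_iff_eq_unitClosedBall {𝔇 : Subring D} :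
    IsMaximalOrder K O 𝔇 ↔ 𝔇 = Subring.unitClosedBall D := by
  have le_ball (𝔇' : Subring D) (h : IsOrder K O 𝔇') : 𝔇' ≤ Subring.unitClosedBall D :=
    h.subset_closedBall fun c => (hO c).mp
  constructor
  · exact fun ⟨h𝔇, hmax⟩ => hmax _ (isOrder_unitClosedBall hO) (le_ball 𝔇 h𝔇)
  · rintro rfl
    exact ⟨isOrder_unitClosedBall hO, fun 𝔇' h𝔇' hle => le_antisymm hle (le_ball 𝔇' h𝔇')⟩

theorem integralSet_eq_unitClosedBall [IsNoetherianRing O] :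
    integralSet K O D = Subring.unitClosedBall D := by
  ext x
  rw [mem_integralSet_iff, SetLike.mem_coe, Subring.mem_unitClosedBall]
  constructor
  · intro hx
    obtain ⟨t, ht⟩ := hx.fg_adjoin_singleton
    exact norm_le_one_of_forall_pow_mem_span (fun c => (hO c).mp) fun n =>
      by rw [ht]; exact pow_mem (Algebra.self_mem_adjoin_singleton O x) n
  · intro hx
    obtain ⟨t, ht⟩ := exists_finset_closedBall_subset_span (E := D) fun c => (hO c).mpr
    let B : Subalgebra O D :=
      { Subring.unitClosedBall D with
        algebraMap_mem' := fun c => algebraMap_mem_unitClosedBall ((hO c).mp c.2) }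
    exact IsIntegral.of_mem_of_fg B ((Submodule.fg_span t.finite_toSet).of_le ht) x
      (mem_closedBall_zero_iff.mpr hx)

end Orders

theorem unique_maximal_order_of_division_algebra_general
    (K : Type*) [NonarchLocalField K] (O : Subring K) (hO : ∀ x : K, x ∈ O ↔ ‖x‖ ≤ 1)
    (D : Type*) [NormedDivisionRing D] [NormedAlgebra K D] [FiniteDimensional K D] :
    (∃! 𝔇 : Subring D, IsMaximalOrder K O 𝔇) ∧
    (∀ 𝔇 : Subring D, IsMaximalOrder K O 𝔇 → (𝔇 : Set D) = {x : D | ‖x‖ ≤ 1}) ∧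
    {x : D | ‖x‖ ≤ 1} = integralSet K O D := by
  have : LocallyCompactSpace K := NonarchLocalField.locallyCompact
  have : ProperSpace K := .of_locallyCompactSpace K
  have : IsUltrametricDist K :=
    .isUltrametricDist_of_isNonarchimedean_norm NonarchLocalField.isNonarchimedean
  have : IsUltrametricDist D := .of_normedAlgebra K
  have := isPrincipalIdealRing_of_forall_mem_iff_norm_le_one hO
  have hball : (Subring.unitClosedBall D : Set D) = {x | ‖x‖ ≤ 1} :=
    Set.ext fun _ => Subring.mem_unitClosedBall
  have hmax (𝔇 : Subring D) := isMaximalOrder_iff_eq_unitClosedBall hO (𝔇 := 𝔇)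
  refine ⟨⟨_, (hmax _).mpr rfl, fun 𝔇 h => (hmax 𝔇).mp h⟩, fun 𝔇 h => ?_, ?_⟩
  · rw [(hmax 𝔇).mp h, hball]
  · rw [← hball, integralSet_eq_unitClosedBall hO]

/-- A central division algebra `D` over a nonarchimedean local field `K` contains a
unique maximal order, namely the set of elements integral over `O_K`, which is the
closed unit ball `{x : |x| ≤ 1}` for the extended absolute value. -/
theorem unique_maximal_order_of_division_algebra
    (K : Type*) [NonarchLocalField K] (O : Subring K) (hO : ∀ x : K, x ∈ O ↔ ‖x‖ ≤ 1)
    (D : Type*) [NormedDivisionRing D] [NormedAlgebra K D] [FiniteDimensional K D]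
    [Algebra.IsCentral K D]
    (hext : ∀ k : K, ‖algebraMap K D k‖ = ‖k‖) :
    (∃! 𝔇 : Subring D, IsMaximalOrder K O 𝔇) ∧
    (∀ 𝔇 : Subring D, IsMaximalOrder K O 𝔇 → (𝔇 : Set D) = {x : D | ‖x‖ ≤ 1}) ∧
    {x : D | ‖x‖ ≤ 1} = integralSet K O D :=
  unique_maximal_order_of_division_algebra_general K O hO D
end
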